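/- arXiv:2504.05821 — 10 statements merged into one kernel-verified Lean document; each statement's English description precedes it below -/
import Mathlib

section
/- If B is a bialgebra over a field k and Id denotes the identity map of B, regarded as an element of the convolution algebra End_k(B), and if the subalgebra k[Id] generated by Id in the convolution algebra is finite-dimensional (e.g. if B is finite-dimensional), then there exist n ∈ ℕ and S ∈ End_k(B) with S * Id^{*(n+1)} = Id^{*n} and S * Id = Id * S in the convolution algebra, so that S is simultaneously a left and right n-antipode. -/
noncomputable section
open TensorProduct LinearMap

/-- Convolution product of linear maps from a bialgebra to an algebra. -/
def conv {k B A : Type*} [CommRing k] [Ring B] [Bialgebra k B]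
    [Ring A] [Algebra k A] (f g : B →ₗ[k] A) : B →ₗ[k] A :=
  LinearMap.mul' k A ∘ₗ TensorProduct.map f g ∘ₗ Coalgebra.comul

/-- Unit of the convolution algebra: u ∘ ε. -/
def convUnit (k B A : Type*) [CommRing k] [Ring B] [Bialgebra k B]
    [Ring A] [Algebra k A] : B →ₗ[k] A :=
  Algebra.linearMap k A ∘ₗ Coalgebra.counit

/-- n-th convolution power of the identity. -/
def convPow (k B : Type*) [CommRing k] [Ring B] [Bialgebra k B] : ℕ → (B →ₗ[k] B)
  | 0 => convUnit k B B
  | n + 1 => conv (convPow k B n) LinearMap.id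

/-- The submodule (B ⊗ B)·Δ(ker ε) of B ⊗ B. -/
def oslashRel (k B : Type*) [CommRing k] [Ring B] [Bialgebra k B] :
    Submodule k (B ⊗[k] B) :=
  Submodule.span k {z | ∃ (m : B ⊗[k] B) (b : B),
    Coalgebra.counit (R := k) b = 0 ∧ z = m * Coalgebra.comul b}

/-- B ⊘ B. -/
abbrev Oslash (k B : Type*) [CommRing k] [Ring B] [Bialgebra k B] :=
  (B ⊗[k] B) ⧸ oslashRel k B

/-- The class of x ⊗ y in B ⊘ B. -/
abbrev omk (k : Type*) {B : Type*} [CommRing k] [Ring B] [Bialgebra k B]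
    (z : B ⊗[k] B) : Oslash k B := Submodule.Quotient.mk z

/-- i_B : B → B ⊘ B, b ↦ b ⊘ 1. -/
def iB (k B : Type*) [CommRing k] [Ring B] [Bialgebra k B] : B →ₗ[k] Oslash k B :=
  (oslashRel k B).mkQ ∘ₗ (TensorProduct.mk k B B).flip 1

/-- The diagonal right coaction of B on B ⊗ B: Σ x₁ ⊗ y₁ ⊗ x₂y₂. -/
def coact (k B : Type*) [CommRing k] [Ring B] [Bialgebra k B] :
    (B ⊗[k] B) →ₗ[k] (B ⊗[k] B) ⊗[k] B :=
  (TensorProduct.map LinearMap.id (LinearMap.mul' k B)) ∘ₗ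
    (TensorProduct.tensorTensorTensorComm k B B B B).toLinearMap ∘ₗ
    (TensorProduct.map Coalgebra.comul Coalgebra.comul)

/-- z ↦ z ⊗ 1. -/
def unitR (k B : Type*) [CommRing k] [Ring B] [Bialgebra k B] :
    (B ⊗[k] B) →ₗ[k] (B ⊗[k] B) ⊗[k] B :=
  (TensorProduct.map LinearMap.id (Algebra.linearMap k B)) ∘ₗ
    (TensorProduct.rid k (B ⊗[k] B)).symm.toLinearMap

/-- B ⧄ B : the coinvariants of B ⊗ B. -/
def coinv (k B : Type*) [CommRing k] [Ring B] [Bialgebra k B] :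
    Submodule k (B ⊗[k] B) :=
  LinearMap.eqLocus (coact k B) (unitR k B)

/-- Σ x ⊗ y ↦ Σ x ε(y), on all of B ⊗ B. -/
def pB0 (k B : Type*) [CommRing k] [Ring B] [Bialgebra k B] :
    (B ⊗[k] B) →ₗ[k] B :=
  (TensorProduct.rid k B).toLinearMap ∘ₗ TensorProduct.map LinearMap.id Coalgebra.counit

/-- Σ x ⊗ y ↦ Σ ε(x) y, on all of B ⊗ B. -/
def qB0 (k B : Type*) [CommRing k] [Ring B] [Bialgebra k B] :
    (B ⊗[k] B) →ₗ[k] B :=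
  (TensorProduct.lid k B).toLinearMap ∘ₗ TensorProduct.map Coalgebra.counit LinearMap.id

/-- p_B : B ⧄ B → B. -/
def pB (k B : Type*) [CommRing k] [Ring B] [Bialgebra k B] :
    coinv k B →ₗ[k] B :=
  pB0 k B ∘ₗ (coinv k B).subtype

/-! The subalgebra `k[Id]` of the convolution algebra is finite-dimensional, so `Id` is algebraic.
Writing a nonzero annihilating polynomial as `X ^ n * r` with `r(0) ≠ 0` shows that `X ^ n` lies
in the ideal generated by `X ^ (n + 1)` and that polynomial, so `Id^{*n} = S * Id^{*(n+1)}` for some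
`S` that is a polynomial in `Id` and hence commutes with it. -/

open Polynomial WithConv

theorem Polynomial.exists_X_pow_eq_mul_X_pow_succ_add_C_mul {k : Type*} [Field k] {p : k[X]}
    (hp : p ≠ 0) : ∃ (n : ℕ) (q : k[X]) (c : k), X ^ n = q * X ^ (n + 1) + C c * p := by
  obtain ⟨r, hpr, hXr⟩ := p.exists_eq_pow_rootMultiplicity_mul_and_not_dvd hp 0
  set n := rootMultiplicity 0 p
  rw [C_0, sub_zero] at hpr hXr
  have hc : C (r.coeff 0)⁻¹ * C (r.coeff 0) = 1 := by
    rw [← C_mul, inv_mul_cancel₀ (mt X_dvd_iff.mpr hXr), C_1]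
  refine ⟨n, -(C (r.coeff 0)⁻¹ * divX r), (r.coeff 0)⁻¹, ?_⟩
  linear_combination (C (r.coeff 0)⁻¹ * X ^ n) * divX_mul_X_add r - C (r.coeff 0)⁻¹ * hpr
    - X ^ n * hc

theorem IsAlgebraic.exists_aeval_mul_pow_succ_eq_pow {k A : Type*} [Field k] [Ring A]
    [Algebra k A] {x : A} (hx : IsAlgebraic k x) :
    ∃ (n : ℕ) (q : k[X]), aeval x q * x ^ (n + 1) = x ^ n := by
  obtain ⟨p, hp, hpx⟩ := hx
  obtain ⟨n, q, _, h⟩ := exists_X_pow_eq_mul_X_pow_succ_add_C_mul hp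
  refine ⟨n, q, ?_⟩
  simpa [hpx] using (congrArg (aeval x) h).symm

theorem Algebra.toSubmodule_adjoin_singleton_eq_span_range_pow {k A : Type*} [CommSemiring k]
    [Semiring A] [Algebra k A] (x : A) :
    Subalgebra.toSubmodule (adjoin k {x}) = Submodule.span k (Set.range (x ^ ·)) := by
  rw [adjoin_eq_span, ← Submonoid.powers_eq_closure, Submonoid.coe_powers]

theorem isAlgebraic_of_finiteDimensional_span_range_pow {k A : Type*} [Field k] [Ring A]
    [Algebra k A] {x : A} (hx : FiniteDimensional k (Submodule.span k (Set.range (x ^ ·)))) :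
    IsAlgebraic k x := by
  refine (IsIntegral.of_mem_of_fg _ ?_ x (Algebra.self_mem_adjoin_singleton k x)).isAlgebraic
  rw [Algebra.toSubmodule_adjoin_singleton_eq_span_range_pow]
  exact Module.Finite.iff_fg.mp hx

section Convolution

variable {k B : Type*} [CommRing k] [Ring B] [Bialgebra k B]

theorem conv_eq_ofConv_mul {A : Type*} [Ring A] [Algebra k A] (f g : B →ₗ[k] A) :
    conv f g = (toConv f * toConv g).ofConv := rfl

theorem convPow_eq_ofConv_pow (n : ℕ) :
    convPow k B n = ((toConv LinearMap.id : WithConv (B →ₗ[k] B)) ^ n).ofConv := by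
  induction n with
  | zero => rfl
  | succ n ih => rw [convPow, ih, conv_eq_ofConv_mul, pow_succ]

theorem span_range_convPow :
    Submodule.span k (Set.range (convPow k B)) =
      (Submodule.span k (Set.range ((toConv LinearMap.id : WithConv (B →ₗ[k] B)) ^ ·))).map
        (WithConv.linearEquiv k (B →ₗ[k] B) : WithConv (B →ₗ[k] B) →ₗ[k] B →ₗ[k] B) := by
  rw [Submodule.map_span, ← Set.range_comp]
  congr 2
  exact funext convPow_eq_ofConv_pow

end Convolution

theorem stmt0 (k B : Type*) [Field k] [Ring B] [Bialgebra k B]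
    (hfd : FiniteDimensional k (Submodule.span k (Set.range (convPow k B)))) :
    ∃ (n : ℕ) (S : B →ₗ[k] B),
      S ∈ Submodule.span k (Set.range (convPow k B)) ∧
      conv S (convPow k B (n + 1)) = convPow k B n ∧
      conv (convPow k B (n + 1)) S = convPow k B n ∧
      conv S LinearMap.id = conv LinearMap.id S := by
  set x : WithConv (B →ₗ[k] B) := toConv LinearMap.id
  rw [span_range_convPow] at hfd ⊢
  have : FiniteDimensional k (Submodule.span k (Set.range (x ^ ·))) :=
    .equiv (WithConv.linearEquiv k _ |>.submoduleMap _).symm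
  obtain ⟨n, q, hq⟩ :=
    (isAlgebraic_of_finiteDimensional_span_range_pow this).exists_aeval_mul_pow_succ_eq_pow
  have hcomm : Commute (aeval x q) x := by simpa using (Commute.all q X).map (aeval x)
  refine ⟨n, (aeval x q).ofConv, Submodule.mem_map_of_mem ?_, ?_, ?_, ?_⟩
  · rw [← Algebra.toSubmodule_adjoin_singleton_eq_span_range_pow]
    exact aeval_mem_adjoin_singleton k x
  · simp only [convPow_eq_ofConv_pow]
    exact congrArg ofConv hq
  · simp only [convPow_eq_ofConv_pow]
    exact congrArg ofConv ((hcomm.pow_right _).eq.symm.trans hq)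
  · exact congrArg ofConv hcomm.eq
end
end

section
/- Let B be a bialgebra. If B is both a left m-Hopf algebra and a right n-Hopf algebra, then m = n. In particular, a left m-Hopf algebra that admits a right antipode (right convolution inverse of the identity) is a Hopf algebra (m = 0). -/
/-!
The convolution algebra `End_k(B)` is a monoid with unit `u ∘ ε`, and the whole statement is about
the powers of one element `x = Id` of it. If `s x^(m+1) = x^m` and `x^(n+1) t = x^n`, then both
identities persist at every higher level, and sandwiching gives
`x^(m+1) t = s^n x^(m+n+1) t = s^n x^(m+n) = x^m`, so the right identity already holds at level `m`,
and symmetrically the left one at level `n`. Minimality of both levels forces `m = n`.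
A right antipode is the right identity at level `0`, so then `m = 0` and the left inverse of `x`
obtained at level `0` coincides with the right one.
-/

noncomputable section
open TensorProduct LinearMap

section Monoid

variable {M : Type*} [Monoid M] {x s t : M} {m n : ℕ}

theorem mul_pow_add_succ (hs : s * x ^ (m + 1) = x ^ m) (j : ℕ) :
    s * x ^ (m + j + 1) = x ^ (m + j) := by
  rw [add_right_comm, pow_add, ← mul_assoc, hs, pow_add]

theorem pow_add_succ_mul (ht : x ^ (n + 1) * t = x ^ n) (j : ℕ) :
    x ^ (j + n + 1) * t = x ^ (j + n) := by
  rw [add_assoc, pow_add, mul_assoc, ht, pow_add]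

theorem pow_mul_pow_add (hs : s * x ^ (m + 1) = x ^ m) (j : ℕ) :
    s ^ j * x ^ (m + j) = x ^ m := by
  induction j with
  | zero => simp
  | succ j ih => rw [pow_succ, mul_assoc, ← add_assoc, mul_pow_add_succ hs, ih]

theorem pow_succ_mul_eq_of_mul_pow_succ_eq (hs : s * x ^ (m + 1) = x ^ m)
    (ht : x ^ (n + 1) * t = x ^ n) : x ^ (m + 1) * t = x ^ m :=
  calc x ^ (m + 1) * t = s ^ n * (x ^ (m + n + 1) * t) := by
        rw [pow_succ, ← pow_mul_pow_add hs n, pow_succ, mul_assoc, mul_assoc, mul_assoc]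
    _ = x ^ m := by rw [pow_add_succ_mul ht, pow_mul_pow_add hs]

theorem mul_pow_succ_eq_of_pow_succ_mul_eq (hs : s * x ^ (m + 1) = x ^ m)
    (ht : x ^ (n + 1) * t = x ^ n) : s * x ^ (n + 1) = x ^ n :=
  MulOpposite.op_injective <| by
    simpa using pow_succ_mul_eq_of_mul_pow_succ_eq (x := MulOpposite.op x)
      (by simpa using congrArg MulOpposite.op ht) (by simpa using congrArg MulOpposite.op hs)

theorem eq_of_isLeast_left_of_isLeast_right
    (hm : IsLeast {l | ∃ s, s * x ^ (l + 1) = x ^ l} m)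
    (hn : IsLeast {l | ∃ t, x ^ (l + 1) * t = x ^ l} n) : m = n := by
  obtain ⟨⟨s, hs⟩, hm_min⟩ := hm
  obtain ⟨⟨t, ht⟩, hn_min⟩ := hn
  exact le_antisymm (hm_min ⟨s, mul_pow_succ_eq_of_pow_succ_mul_eq hs ht⟩)
    (hn_min ⟨t, pow_succ_mul_eq_of_mul_pow_succ_eq hs ht⟩)

theorem eq_zero_and_exists_inverse_of_isLeast_left_of_mul_eq_one
    (hm : IsLeast {l | ∃ s, s * x ^ (l + 1) = x ^ l} m) (ht : x * t = 1) :
    m = 0 ∧ ∃ s, s * x = 1 ∧ x * s = 1 := by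
  have ht₀ : x ^ (0 + 1) * t = x ^ 0 := by simpa using ht
  refine ⟨eq_of_isLeast_left_of_isLeast_right hm ⟨⟨t, ht₀⟩, fun l _ => l.zero_le⟩, ?_⟩
  obtain ⟨s, hs⟩ := hm.1
  have hs₀ : s * x = 1 := by simpa using mul_pow_succ_eq_of_pow_succ_mul_eq hs ht₀
  exact ⟨s, hs₀, left_inv_eq_right_inv hs₀ ht ▸ ht⟩

end Monoid

section Convolution

open WithConv

variable {k B A : Type*} [CommRing k] [Ring B] [Bialgebra k B] [Ring A] [Algebra k A]

theorem conv_eq_iff {f g h : B →ₗ[k] A} : conv f g = h ↔ toConv f * toConv g = toConv h :=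
  toConv_injective.eq_iff.symm

theorem exists_linearMap_iff_exists_withConv {p : (B →ₗ[k] A) → Prop} :
    (∃ f, p f) ↔ ∃ f : WithConv (B →ₗ[k] A), p f.ofConv :=
  ofConv_surjective.exists

theorem toConv_convUnit : toConv (convUnit k B A) = 1 := rfl

theorem toConv_convPow (n : ℕ) :
    toConv (convPow k B n) = toConv (LinearMap.id : B →ₗ[k] B) ^ n := by
  induction n with
  | zero => rfl
  | succ n ih => rw [pow_succ, ← ih]; rfl

end Convolution

theorem stmt1 (k B : Type*) [Field k] [Ring B] [Bialgebra k B] (m n : ℕ) :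
    (((∃ S : B →ₗ[k] B, conv S (convPow k B (m + 1)) = convPow k B m) ∧
        (∀ l, (∃ S : B →ₗ[k] B, conv S (convPow k B (l + 1)) = convPow k B l) → m ≤ l)) →
      ((∃ T : B →ₗ[k] B, conv (convPow k B (n + 1)) T = convPow k B n) ∧
        (∀ l, (∃ T : B →ₗ[k] B, conv (convPow k B (l + 1)) T = convPow k B l) → n ≤ l)) →
      m = n) ∧
    (((∃ S : B →ₗ[k] B, conv S (convPow k B (m + 1)) = convPow k B m) ∧
        (∀ l, (∃ S : B →ₗ[k] B, conv S (convPow k B (l + 1)) = convPow k B l) → m ≤ l)) →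
      (∃ T : B →ₗ[k] B, conv LinearMap.id T = convUnit k B B) →
      m = 0 ∧ ∃ S : B →ₗ[k] B, conv S LinearMap.id = convUnit k B B ∧
        conv LinearMap.id S = convUnit k B B) := by
  simp only [exists_linearMap_iff_exists_withConv, conv_eq_iff, WithConv.toConv_ofConv,
    toConv_convPow, toConv_convUnit]
  exact ⟨fun hm hn => eq_of_isLeast_left_of_isLeast_right hm hn,
    fun hm ⟨_, ht⟩ => eq_zero_and_exists_inverse_of_isLeast_left_of_mul_eq_one hm ht⟩
end
end

section
/- Let B be a bialgebra and let B ⧄ B denote the space of coinvariants {Σ xᶦ ⊗ yᵢ ∈ B ⊗ B : Σ xᶦ₁ ⊗ yᵢ₁ ⊗ xᶦ₂yᵢ₂ = Σ xᶦ ⊗ yᵢ ⊗ 1}. Then B ⧄ B is a subalgebra of B ⊗ B^op (i.e. closed under (u ⊗ v)·(x ⊗ y) = ux ⊗ yv and containing 1 ⊗ 1), and every element Σ xᶦ ⊗ yᵢ ∈ B ⧄ B satisfies Σ xᶦyᵢ = Σ ε(xᶦ)ε(yᵢ)·1. -/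
noncomputable section
open TensorProduct LinearMap

/-!
Identify `B ⊗ B` with the enveloping algebra `Bᵉ = B ⊗ Bᵐᵒᵖ`. It is again a bialgebra, and it
acts on `B` by `(u ⊗ v) · b = u b v`; the diagonal coaction becomes `e ↦ Σ e₁ ⊗ e₂ · 1`.
Write `ρ(X) = Σ a ⊗ b · 1` for `X = Σ a ⊗ b ∈ Bᵉ ⊗ Bᵉ`. Since `ρ(X Y)` depends only on `ρ(Y)`,
coinvariance of `w` lets us replace `Δz Δw` by `Δz (w ⊗ 1)`, so the coaction of `zw` is the
coaction of `z` multiplied on the right by `w`, which is `zw ⊗ 1` by coinvariance of `z`.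
Applying `ε ⊗ id` to `Σ e₁ ⊗ e₂ · 1 = e ⊗ 1` gives `e · 1 = ε(e) 1`, the last claim.
-/

namespace MulOpposite

variable {R A : Type*} [CommSemiring R] [Semiring A] [Bialgebra R A]

instance instBialgebra : Bialgebra R Aᵐᵒᵖ :=
  Bialgebra.mk' R Aᵐᵒᵖ (Bialgebra.counit_one (R := R) (A := A))
    (fun {a b} => (Bialgebra.counit_mul (R := R) b.unop a.unop).trans (mul_comm _ _))
    (by simp [comul_def, Algebra.TensorProduct.one_def])
    -- the comultiplication of `Aᵐᵒᵖ` is `Δᵒᵖ` read through `(A ⊗ A)ᵐᵒᵖ ≃ Aᵐᵒᵖ ⊗ Aᵐᵒᵖ`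
    (map_mul ((Algebra.TensorProduct.opAlgEquiv R R A A).symm.toAlgHom.comp
      (AlgHom.op (Bialgebra.comulAlgHom R A))) _ _)

end MulOpposite

namespace Bialgebra

variable {R E M : Type*} [CommSemiring R] [Semiring E] [Bialgebra R E]
  [AddCommMonoid M] [Module R M] (σ : E →ₐ[R] Module.End R M) (m : M)

def orbitMap : E →ₗ[R] M := σ.toLinearMap.flip m

@[simp]
theorem orbitMap_apply (e : E) : orbitMap σ m e = σ e m := rfl

def coaction : E →ₗ[R] E ⊗[R] M := (orbitMap σ m).lTensor E ∘ₗ Coalgebra.comul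

def coinvariants : Submodule R E :=
  LinearMap.eqLocus (coaction σ m) ((TensorProduct.mk R E M).flip m)

variable {σ m}

theorem mem_coinvariants {e : E} : e ∈ coinvariants σ m ↔ coaction σ m e = e ⊗ₜ m := Iff.rfl

theorem one_mem_coinvariants : 1 ∈ coinvariants σ m := by
  simp [mem_coinvariants, coaction, Algebra.TensorProduct.one_def]

theorem lTensor_orbitMap_tmul_mul (a b : E) (Y : E ⊗[R] E) :
    (orbitMap σ m).lTensor E ((a ⊗ₜ b) * Y) =
      map (mulLeft R a) (σ b) ((orbitMap σ m).lTensor E Y) := by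
  induction Y using TensorProduct.induction_on with
  | zero => simp
  | add Y Y' hY hY' => simp only [mul_add, map_add, hY, hY']
  | tmul c d => simp [Algebra.TensorProduct.tmul_mul_tmul]

theorem lTensor_orbitMap_mul_congr (X : E ⊗[R] E) {Y Y' : E ⊗[R] E}
    (h : (orbitMap σ m).lTensor E Y = (orbitMap σ m).lTensor E Y') :
    (orbitMap σ m).lTensor E (X * Y) = (orbitMap σ m).lTensor E (X * Y') := by
  induction X using TensorProduct.induction_on with
  | zero => simp
  | add X X' hX hX' => simp only [add_mul, map_add, hX, hX']
  | tmul a b => rw [lTensor_orbitMap_tmul_mul, lTensor_orbitMap_tmul_mul, h]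

theorem lTensor_orbitMap_mul_tmul_one (X : E ⊗[R] E) (w : E) :
    (orbitMap σ m).lTensor E (X * (w ⊗ₜ 1)) =
      (mulRight R w).rTensor M ((orbitMap σ m).lTensor E X) := by
  induction X using TensorProduct.induction_on with
  | zero => simp
  | add X X' hX hX' => simp only [add_mul, map_add, hX, hX']
  | tmul a b => simp [Algebra.TensorProduct.tmul_mul_tmul]

theorem mul_mem_coinvariants {z w : E} (hz : z ∈ coinvariants σ m)
    (hw : w ∈ coinvariants σ m) : z * w ∈ coinvariants σ m := by
  rw [mem_coinvariants, coaction, LinearMap.comp_apply] at *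
  have hw' : (orbitMap σ m).lTensor E (Coalgebra.comul w) = (orbitMap σ m).lTensor E (w ⊗ₜ 1) := by
    simpa using hw
  rw [comul_mul, lTensor_orbitMap_mul_congr _ hw', lTensor_orbitMap_mul_tmul_one, hz]
  simp

theorem apply_eq_counit_smul_of_mem_coinvariants {e : E} (he : e ∈ coinvariants σ m) :
    σ e m = Coalgebra.counit (R := R) e • m := by
  have hcounit : (Coalgebra.counit (R := R)).rTensor M (coaction σ m e) = 1 ⊗ₜ σ e m := by
    rw [coaction, ← LinearMap.comp_apply, ← LinearMap.comp_assoc, rTensor_comp_lTensor,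
      ← lTensor_comp_rTensor, LinearMap.comp_apply, LinearMap.comp_apply,
      Coalgebra.rTensor_counit_comul, lTensor_tmul, orbitMap_apply]
  simpa [mem_coinvariants.mp he] using congrArg (_root_.TensorProduct.lid R M) hcounit.symm

end Bialgebra

open Bialgebra

abbrev tensorOpEquiv (k B : Type*) [CommSemiring k] [AddCommMonoid B] [Module k B] :
    B ⊗[k] B ≃ₗ[k] B ⊗[k] Bᵐᵒᵖ :=
  TensorProduct.congr (LinearEquiv.refl k B) (MulOpposite.opLinearEquiv k)

section Enveloping

variable {k B : Type*} [CommRing k] [Ring B] [Bialgebra k B]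

theorem congr_tensorOpEquiv_comp_coact :
    (TensorProduct.congr (tensorOpEquiv k B) (LinearEquiv.refl k B)).toLinearMap ∘ₗ coact k B =
      coaction (AlgHom.mulLeftRight k B) 1 ∘ₗ (tensorOpEquiv k B).toLinearMap := by
  ext x y
  simp only [toLinearMap_congr, LinearEquiv.refl_toLinearMap, coact, coaction,
    AlgebraTensorModule.curry_apply, restrictScalars_self, curry_apply, coe_comp,
    LinearEquiv.coe_coe, Function.comp_apply, map_tmul, id_coe, id_eq, comul_tmul,
    MulOpposite.coe_opLinearEquiv, MulOpposite.comul_def, MulOpposite.coe_opLinearEquiv_symm,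
    MulOpposite.unop_op]
  generalize Coalgebra.comul (R := k) x = X, Coalgebra.comul (R := k) y = Y
  induction X using TensorProduct.induction_on with
  | zero => simp
  | add X X' hX hX' => simp only [add_tmul, map_add, hX, hX']
  | tmul a b =>
    induction Y using TensorProduct.induction_on with
    | zero => simp
    | add Y Y' hY hY' => simp only [tmul_add, map_add, hY, hY']
    | tmul c d => simp

theorem mem_coinv_iff {z : B ⊗[k] B} :
    z ∈ coinv k B ↔ tensorOpEquiv k B z ∈ coinvariants (AlgHom.mulLeftRight k B) 1 := by
  rw [coinv, LinearMap.mem_eqLocus, mem_coinvariants,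
    ← (TensorProduct.congr (tensorOpEquiv k B) (LinearEquiv.refl k B)).injective.eq_iff]
  have h := LinearMap.congr_fun congr_tensorOpEquiv_comp_coact z
  simp only [LinearMap.coe_comp, Function.comp_apply, LinearEquiv.coe_coe] at h
  rw [h]
  simp [unitR]

theorem mul'_eq_mulLeftRight_tensorOpEquiv (z : B ⊗[k] B) :
    LinearMap.mul' k B z = AlgHom.mulLeftRight k B (tensorOpEquiv k B z) 1 := by
  induction z using TensorProduct.induction_on with
  | zero => simp
  | add z z' hz hz' => simp only [map_add, LinearMap.add_apply, hz, hz']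
  | tmul x y => simp

theorem counit_tensorOpEquiv_smul_one (z : B ⊗[k] B) :
    Coalgebra.counit (R := k) (tensorOpEquiv k B z) • (1 : B) =
      (Algebra.linearMap k B ∘ₗ LinearMap.mul' k k ∘ₗ
        TensorProduct.map Coalgebra.counit Coalgebra.counit) z := by
  induction z using TensorProduct.induction_on with
  | zero => simp
  | add z z' hz hz' => simp only [map_add, add_smul, hz, hz']
  | tmul x y => simp [Algebra.algebraMap_eq_smul_one, MulOpposite.counit_def, mul_comm]

end Enveloping

theorem stmt4 (k B : Type*) [Field k] [Ring B] [Bialgebra k B] :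
    ((1 : B) ⊗ₜ[k] (1 : B) ∈ coinv k B) ∧
    (∀ z ∈ coinv k B, ∀ w ∈ coinv k B,
      (TensorProduct.congr (LinearEquiv.refl k B) (MulOpposite.opLinearEquiv k)).symm
        ((TensorProduct.congr (LinearEquiv.refl k B) (MulOpposite.opLinearEquiv k)) z *
          (TensorProduct.congr (LinearEquiv.refl k B) (MulOpposite.opLinearEquiv k)) w)
        ∈ coinv k B) ∧
    (∀ z ∈ coinv k B,
      LinearMap.mul' k B z =
        (Algebra.linearMap k B ∘ₗ LinearMap.mul' k k ∘ₗ
          TensorProduct.map Coalgebra.counit Coalgebra.counit) z) := by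
  refine ⟨mem_coinv_iff.mpr one_mem_coinvariants, fun z hz w hw => ?_, fun z hz => ?_⟩
  · rw [mem_coinv_iff, LinearEquiv.apply_symm_apply]
    exact mul_mem_coinvariants (mem_coinv_iff.mp hz) (mem_coinv_iff.mp hw)
  · rw [mul'_eq_mulLeftRight_tensorOpEquiv, ← counit_tensorOpEquiv_smul_one]
    exact apply_eq_counit_smul_of_mem_coinvariants (mem_coinv_iff.mp hz)
end
end

section
/- Let B be a bialgebra. The map i_B : B → B ⊘ B, b ↦ b ⊘ 1, is surjective if and only if there exists a linear endomorphism S of B such that 1 ⊘ y = S(y) ⊘ 1 in B ⊘ B for every y ∈ B, if and only if for every x, y ∈ B there exists y' ∈ B with x ⊘ y = x y' ⊘ 1. -/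
noncomputable section
open TensorProduct LinearMap

/-! The relation x ⊘ y = x S(y) ⊘ 1 is the relation 1 ⊘ y = S(y) ⊘ 1 multiplied on the left by
x ⊗ 1, so the second condition gives the third, and the third puts every pure tensor, hence all
of B ⊘ B, in the image of i_B. Over a field, a linear section of a surjective i_B yields S. -/

section

variable {k B : Type*} [CommRing k] [Ring B] [Bialgebra k B]

theorem mul_mem_oslashRel (w : B ⊗[k] B) {z : B ⊗[k] B} (hz : z ∈ oslashRel k B) :
    w * z ∈ oslashRel k B := by
  induction hz using Submodule.span_induction with
  | mem _ h =>
    obtain ⟨m, b, hb, rfl⟩ := h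
    exact Submodule.subset_span ⟨w * m, b, hb, (mul_assoc w m _).symm⟩
  | zero => simp
  | add _ _ _ _ hx hy => simpa [mul_add] using add_mem hx hy
  | smul c _ _ hx => simpa [mul_smul_comm] using Submodule.smul_mem _ c hx

theorem omk_mul_eq_omk_mul (w : B ⊗[k] B) {z z' : B ⊗[k] B} (h : omk k z = omk k z') :
    omk k (w * z) = omk k (w * z') := by
  rw [Submodule.Quotient.eq] at h ⊢
  simpa [mul_sub] using mul_mem_oslashRel w h

theorem omk_tmul_eq_omk_mul_tmul_one {y s : B}
    (h : omk k ((1 : B) ⊗ₜ[k] y) = omk k (s ⊗ₜ[k] (1 : B))) (x : B) :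
    omk k (x ⊗ₜ[k] y) = omk k ((x * s) ⊗ₜ[k] (1 : B)) := by
  simpa using omk_mul_eq_omk_mul (x ⊗ₜ[k] (1 : B)) h

theorem surjective_iB_of_forall_tmul
    (h : ∀ x y : B, ∃ y' : B, omk k (x ⊗ₜ[k] y) = omk k ((x * y') ⊗ₜ[k] (1 : B))) :
    Function.Surjective (iB k B) := by
  rw [← LinearMap.range_eq_top, eq_top_iff]
  rintro z -
  obtain ⟨t, rfl⟩ := Submodule.Quotient.mk_surjective _ z
  induction t using TensorProduct.induction_on with
  | zero => exact zero_mem _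
  | tmul x y =>
    obtain ⟨y', hy'⟩ := h x y
    exact ⟨x * y', hy'.symm⟩
  | add _ _ ha hb => exact add_mem ha hb

end

theorem exists_linearMap_omk_one_tmul_of_surjective_iB {k B : Type*} [Field k] [Ring B]
    [Bialgebra k B] (hs : Function.Surjective (iB k B)) :
    ∃ S : B →ₗ[k] B, ∀ y : B, omk k ((1 : B) ⊗ₜ[k] y) = omk k (S y ⊗ₜ[k] (1 : B)) := by
  obtain ⟨g, hg⟩ := (iB k B).exists_rightInverse_of_surjective (LinearMap.range_eq_top.mpr hs)
  refine ⟨g ∘ₗ (oslashRel k B).mkQ ∘ₗ TensorProduct.mk k B B 1, fun y => ?_⟩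
  exact (LinearMap.congr_fun hg (omk k ((1 : B) ⊗ₜ[k] y))).symm

theorem stmt5 (k B : Type*) [Field k] [Ring B] [Bialgebra k B] :
    (Function.Surjective (iB k B) ↔
      ∃ S : B →ₗ[k] B, ∀ y : B,
        omk k ((1 : B) ⊗ₜ[k] y) = omk k (S y ⊗ₜ[k] (1 : B))) ∧
    (Function.Surjective (iB k B) ↔
      ∀ x y : B, ∃ y' : B,
        omk k (x ⊗ₜ[k] y) = omk k ((x * y') ⊗ₜ[k] (1 : B))) := by
  have antipode_to_tmul : (∃ S : B →ₗ[k] B, ∀ y : B,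
      omk k ((1 : B) ⊗ₜ[k] y) = omk k (S y ⊗ₜ[k] (1 : B))) →
      ∀ x y : B, ∃ y' : B, omk k (x ⊗ₜ[k] y) = omk k ((x * y') ⊗ₜ[k] (1 : B)) :=
    fun ⟨S, hS⟩ x y => ⟨S y, omk_tmul_eq_omk_mul_tmul_one (hS y) x⟩
  exact ⟨⟨exists_linearMap_omk_one_tmul_of_surjective_iB,
      surjective_iB_of_forall_tmul ∘ antipode_to_tmul⟩,
    ⟨antipode_to_tmul ∘ exists_linearMap_omk_one_tmul_of_surjective_iB,
      surjective_iB_of_forall_tmul⟩⟩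
end
end

section
/- Let B be a bialgebra with a left n-antipode S. Then for every coinvariant element Σ xᶦ ⊗ yᵢ ∈ B ⧄ B one has Σ S(xᶦ)ε(yᵢ) = Σ ε(xᶦ)yᵢ, and consequently the canonical map p_B : B ⧄ B → B, Σ xᶦ ⊗ yᵢ ↦ Σ xᶦ ε(yᵢ), is injective. -/
/-!
Write `z = Σ xⁱ ⊗ yᵢ` and `W = z ⊗ 1 ∈ (B ⊗ B) ⊗ B`. The operators
`F ((a ⊗ b) ⊗ u) = Σ (a₁ ⊗ b) ⊗ a₂u` and `D ((a ⊗ b) ⊗ u) = Σ (a ⊗ b₁) ⊗ u b₂` commute, and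
coinvariance of `z` says precisely `F (D W) = W`. The contraction `Ψ_g ((a ⊗ b) ⊗ u) = g(a) u ⊗ b`
satisfies `Ψ_g ∘ F = Ψ_(g * id)`, hence `Ψ_(g * idʲ) (Dᵐ⁺ʲ W) = Ψ_g (Dᵐ W)`. Taking
`g = S, m = 0, j = n + 1` and `g = uε, m = 1, j = n`, the identity `S * idⁿ⁺¹ = idⁿ` gives
`Σ S(xⁱ) ⊗ yᵢ = Σ ε(xⁱ) yᵢ₍₂₎ ⊗ yᵢ₍₁₎`, and applying `id ⊗ ε` yields the formula.

For injectivity: for every functional `f` the map `a ↦ f(a₁) a₂` is right colinear, so tensoring it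
with `id` preserves coinvariants. Applied to the image of `z ∈ ker p_B`, the formula gives
`Σ f(xⁱ) yᵢ = 0` for all `f`, whence `z = 0`.
-/

noncomputable section
open TensorProduct LinearMap

open Coalgebra WithConv

theorem TensorProduct.eq_zero_of_forall_lid_rTensor_eq_zero {R M N : Type*} [CommRing R]
    [AddCommGroup M] [Module R M] [Module.Free R M] [AddCommGroup N] [Module R N]
    {x : M ⊗[R] N} (hx : ∀ f : Module.Dual R M, TensorProduct.lid R N (f.rTensor N x) = 0) :
    x = 0 := by
  let b := Module.Free.chooseBasis R M
  refine (TensorProduct.equivFinsuppOfBasisLeft b).map_eq_zero_iff.mp (Finsupp.ext fun i ↦ ?_)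
  rw [TensorProduct.equivFinsuppOfBasisLeft_apply, hx]
  rfl

namespace Coinv

variable {k B : Type*} [CommRing k] [Ring B] [Bialgebra k B]

lemma conv_eq_ofConv_mul {A : Type*} [Ring A] [Algebra k A] (f g : B →ₗ[k] A) :
    conv f g = (toConv f * toConv g).ofConv :=
  rfl

lemma convPow_eq_ofConv_pow (m : ℕ) : convPow k B m = (toConv LinearMap.id ^ m).ofConv := by
  induction m with
  | zero => rfl
  | succ m ih => rw [pow_succ, convPow, conv_eq_ofConv_mul, ih]

variable (k B) in
def coactFst : (B ⊗[k] B) ⊗[k] B →ₗ[k] (B ⊗[k] B) ⊗[k] B :=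
  (TensorProduct.rightComm k B B B).toLinearMap ∘ₗ
    ((mul' k B).lTensor B ∘ₗ (TensorProduct.assoc k B B B).toLinearMap ∘ₗ
      comul.rTensor B).rTensor B ∘ₗ
    (TensorProduct.rightComm k B B B).toLinearMap

variable (k B) in
def coactSnd : (B ⊗[k] B) ⊗[k] B →ₗ[k] (B ⊗[k] B) ⊗[k] B :=
  (TensorProduct.assoc k B B B).symm.toLinearMap ∘ₗ
    ((mul' k B ∘ₗ (TensorProduct.comm k B B).toLinearMap).lTensor B ∘ₗ
      (TensorProduct.assoc k B B B).toLinearMap ∘ₗ comul.rTensor B).lTensor B ∘ₗ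
    (TensorProduct.assoc k B B B).toLinearMap

def contract (φ : WithConv (B →ₗ[k] B)) : (B ⊗[k] B) ⊗[k] B →ₗ[k] B ⊗[k] B :=
  (mul' k B).rTensor B ∘ₗ (TensorProduct.rightComm k B B B).toLinearMap ∘ₗ
    (φ.ofConv.rTensor B).rTensor B

lemma coactFst_tmul (a b u : B) :
    coactFst k B ((a ⊗ₜ b) ⊗ₜ u) =
      ∑ i ∈ (ℛ k a).index, ((ℛ k a).left i ⊗ₜ b) ⊗ₜ ((ℛ k a).right i * u) := by
  simp [coactFst, ← (ℛ k a).eq, sum_tmul, map_sum]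

lemma coactSnd_tmul (a b u : B) :
    coactSnd k B ((a ⊗ₜ b) ⊗ₜ u) =
      ∑ i ∈ (ℛ k b).index, (a ⊗ₜ (ℛ k b).left i) ⊗ₜ (u * (ℛ k b).right i) := by
  simp [coactSnd, ← (ℛ k b).eq, sum_tmul, tmul_sum, map_sum]

@[simp]
lemma contract_tmul (φ : WithConv (B →ₗ[k] B)) (a b u : B) :
    contract φ ((a ⊗ₜ b) ⊗ₜ u) = (φ a * u) ⊗ₜ b := by
  simp [contract]

lemma commute_coactFst_coactSnd : Commute (coactFst k B) (coactSnd k B) := by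
  refine TensorProduct.ext_threefold fun a b u ↦ ?_
  simp [Module.End.mul_eq_comp, coactFst_tmul, coactSnd_tmul, map_sum, mul_assoc]
  exact Finset.sum_comm

lemma coactFst_comp_coactSnd_comp_unitR :
    coactFst k B ∘ₗ coactSnd k B ∘ₗ unitR k B = coact k B :=
  TensorProduct.ext' fun a b ↦ by
    simp [unitR, coact, coactFst_tmul, coactSnd_tmul, map_sum, ← (ℛ k a).eq, ← (ℛ k b).eq,
      sum_tmul, tmul_sum]

lemma contract_comp_coactFst (φ : WithConv (B →ₗ[k] B)) :
    contract φ ∘ₗ coactFst k B = contract (φ * toConv LinearMap.id) := by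
  refine TensorProduct.ext_threefold fun a b u ↦ ?_
  simp [coactFst_tmul, map_sum, (ℛ k a).convMul_apply, ← sum_tmul, Finset.sum_mul, mul_assoc]

lemma contract_mul_pow {z : B ⊗[k] B} (hz : z ∈ coinv k B) (φ : WithConv (B →ₗ[k] B))
    (m j : ℕ) :
    contract (φ * toConv LinearMap.id ^ j) ((coactSnd k B ^ (m + j)) (unitR k B z)) =
      contract φ ((coactSnd k B ^ m) (unitR k B z)) := by
  have hfix : coactFst k B (coactSnd k B (unitR k B z)) = unitR k B z :=
    (LinearMap.congr_fun coactFst_comp_coactSnd_comp_unitR z).trans hz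
  induction j with
  | zero => simp
  | succ j ih =>
    rw [← ih, pow_succ, ← mul_assoc, ← contract_comp_coactFst, LinearMap.comp_apply,
      ← add_assoc, pow_succ, Module.End.mul_apply, ← Module.End.mul_apply (coactFst k B),
      (commute_coactFst_coactSnd.pow_right _).eq, Module.End.mul_apply, hfix]

lemma rid_lTensor_counit_comp_contract_comp_unitR (φ : WithConv (B →ₗ[k] B)) :
    (TensorProduct.rid k B).toLinearMap ∘ₗ counit.lTensor B ∘ₗ contract φ ∘ₗ unitR k B =
      (TensorProduct.rid k B).toLinearMap ∘ₗ TensorProduct.map φ.ofConv counit :=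
  TensorProduct.ext' fun a b ↦ by simp [unitR]

lemma rid_lTensor_counit_comp_contract_one_comp_coactSnd_comp_unitR :
    (TensorProduct.rid k B).toLinearMap ∘ₗ counit.lTensor B ∘ₗ contract 1 ∘ₗ
      coactSnd k B ∘ₗ unitR k B = qB0 k B :=
  TensorProduct.ext' fun a b ↦ by
    simp [unitR, qB0, coactSnd_tmul, map_sum, ← Algebra.smul_def, smul_comm _ (counit a),
      ← Finset.smul_sum, sum_counit_smul]

theorem rid_map_counit_eq_qB0 {n : ℕ} {S : B →ₗ[k] B}
    (hS : conv S (convPow k B (n + 1)) = convPow k B n) {z : B ⊗[k] B} (hz : z ∈ coinv k B) :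
    ((TensorProduct.rid k B).toLinearMap ∘ₗ TensorProduct.map S counit) z = qB0 k B z := by
  have hS' : toConv S * toConv LinearMap.id ^ (n + 1) = toConv LinearMap.id ^ n :=
    WithConv.ext (by simpa [conv_eq_ofConv_mul, convPow_eq_ofConv_pow] using hS)
  have key : contract (toConv S) (unitR k B z) = contract 1 (coactSnd k B (unitR k B z)) :=
    calc contract (toConv S) (unitR k B z)
        = contract (toConv S * toConv LinearMap.id ^ (n + 1))
            ((coactSnd k B ^ (0 + (n + 1))) (unitR k B z)) := by
          simpa using (contract_mul_pow hz (toConv S) 0 (n + 1)).symm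
      _ = contract (1 * toConv LinearMap.id ^ n)
            ((coactSnd k B ^ (1 + n)) (unitR k B z)) := by
          rw [hS', one_mul, zero_add, add_comm]
      _ = contract 1 (coactSnd k B (unitR k B z)) := by
          simpa using contract_mul_pow hz 1 1 n
  calc ((TensorProduct.rid k B).toLinearMap ∘ₗ TensorProduct.map S counit) z
      = ((TensorProduct.rid k B).toLinearMap ∘ₗ counit.lTensor B ∘ₗ contract (toConv S) ∘ₗ
          unitR k B) z := by rw [rid_lTensor_counit_comp_contract_comp_unitR]
    _ = ((TensorProduct.rid k B).toLinearMap ∘ₗ counit.lTensor B ∘ₗ contract 1 ∘ₗ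
          coactSnd k B ∘ₗ unitR k B) z := by simp only [LinearMap.comp_apply, key]
    _ = qB0 k B z := by rw [rid_lTensor_counit_comp_contract_one_comp_coactSnd_comp_unitR]

def rightHit (f : Module.Dual k B) : B →ₗ[k] B :=
  (TensorProduct.lid k B).toLinearMap ∘ₗ f.rTensor B ∘ₗ comul

lemma comul_comp_rightHit (f : Module.Dual k B) :
    comul ∘ₗ rightHit f = (rightHit f).rTensor B ∘ₗ comul := by
  have hlid : comul ∘ₗ (TensorProduct.lid k B).toLinearMap ∘ₗ f.rTensor B =
      (TensorProduct.lid k (B ⊗[k] B)).toLinearMap ∘ₗ f.rTensor (B ⊗[k] B) ∘ₗ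
        comul.lTensor B :=
    TensorProduct.ext' fun c b ↦ by simp
  have hassoc : (TensorProduct.lid k (B ⊗[k] B)).toLinearMap ∘ₗ f.rTensor (B ⊗[k] B) ∘ₗ
      (TensorProduct.assoc k B B B).toLinearMap =
        ((TensorProduct.lid k B).toLinearMap ∘ₗ f.rTensor B).rTensor B :=
    TensorProduct.ext_threefold fun a b c ↦ by simp [smul_tmul']
  calc comul ∘ₗ rightHit f
      = (TensorProduct.lid k (B ⊗[k] B)).toLinearMap ∘ₗ f.rTensor (B ⊗[k] B) ∘ₗ
          comul.lTensor B ∘ₗ comul := by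
        simp only [rightHit, ← LinearMap.comp_assoc, hlid]
    _ = (rightHit f).rTensor B ∘ₗ comul := by
        rw [← Coalgebra.coassoc]
        simp only [← LinearMap.comp_assoc, hassoc, rightHit, LinearMap.rTensor_comp]

lemma counit_rightHit (f : Module.Dual k B) (a : B) : counit (rightHit f a) = f a := by
  have h : counit ∘ₗ (TensorProduct.lid k B).toLinearMap ∘ₗ f.rTensor B =
      f ∘ₗ (TensorProduct.rid k B).toLinearMap ∘ₗ counit.lTensor B :=
    TensorProduct.ext' fun c b ↦ by simp [mul_comm]
  simpa [rightHit] using LinearMap.congr_fun h (comul a)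

lemma coact_comp_rTensor {h : B →ₗ[k] B} (hh : comul ∘ₗ h = h.rTensor B ∘ₗ comul) :
    coact k B ∘ₗ h.rTensor B = (h.rTensor B).rTensor B ∘ₗ coact k B :=
  TensorProduct.ext' fun a b ↦ by
    have ha : comul (h a) = h.rTensor B (comul a) := LinearMap.congr_fun hh a
    simp [coact, ha, ← (ℛ k a).eq, ← (ℛ k b).eq, sum_tmul, tmul_sum, map_sum]

lemma rTensor_mem_coinv {h : B →ₗ[k] B} (hh : comul ∘ₗ h = h.rTensor B ∘ₗ comul)
    {z : B ⊗[k] B} (hz : z ∈ coinv k B) : h.rTensor B z ∈ coinv k B := by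
  rw [coinv, LinearMap.mem_eqLocus] at hz ⊢
  rw [← LinearMap.comp_apply, coact_comp_rTensor hh, LinearMap.comp_apply, hz]
  simp [unitR]

lemma rid_map_counit_comp_rTensor (g h : B →ₗ[k] B) :
    ((TensorProduct.rid k B).toLinearMap ∘ₗ TensorProduct.map g counit) ∘ₗ h.rTensor B =
      g ∘ₗ h ∘ₗ pB0 k B :=
  TensorProduct.ext' fun a b ↦ by simp [pB0]

lemma qB0_comp_rTensor_rightHit (f : Module.Dual k B) :
    qB0 k B ∘ₗ (rightHit f).rTensor B = (TensorProduct.lid k B).toLinearMap ∘ₗ f.rTensor B :=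
  TensorProduct.ext' fun a b ↦ by simp [qB0, counit_rightHit]

theorem pB_injective [Module.Free k B] {n : ℕ} {S : B →ₗ[k] B}
    (hS : conv S (convPow k B (n + 1)) = convPow k B n) : Function.Injective (pB k B) := by
  refine (injective_iff_map_eq_zero _).mpr fun z hz ↦ Subtype.ext ?_
  have hz' : pB0 k B z = 0 := hz
  refine TensorProduct.eq_zero_of_forall_lid_rTensor_eq_zero fun f ↦ ?_
  have h_lhs : ((TensorProduct.rid k B).toLinearMap ∘ₗ TensorProduct.map S counit)
      ((rightHit f).rTensor B z) = 0 := by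
    rw [← LinearMap.comp_apply, rid_map_counit_comp_rTensor]
    simp [hz']
  rw [← h_lhs, rid_map_counit_eq_qB0 hS (rTensor_mem_coinv (comul_comp_rightHit f) z.2)]
  exact (LinearMap.congr_fun (qB0_comp_rTensor_rightHit f) z).symm

end Coinv

theorem stmt8 (k B : Type*) [Field k] [Ring B] [Bialgebra k B]
    (n : ℕ) (S : B →ₗ[k] B)
    (hS : conv S (convPow k B (n + 1)) = convPow k B n) :
    (∀ z ∈ coinv k B,
      ((TensorProduct.rid k B).toLinearMap ∘ₗ TensorProduct.map S Coalgebra.counit) z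
        = qB0 k B z) ∧
    Function.Injective (pB k B) :=
  ⟨fun _ hz ↦ Coinv.rid_map_counit_eq_qB0 hS hz, Coinv.pB_injective hS⟩
end
end

section
/- Let B be a bialgebra. The map p_B : B ⧄ B → B, Σ xᶦ ⊗ yᵢ ↦ Σ xᶦ ε(yᵢ), is injective if and only if there exists a linear endomorphism T of B such that T(Σ xᶦ ε(yᵢ)) = Σ ε(xᶦ) yᵢ for every Σ xᶦ ⊗ yᵢ ∈ B ⧄ B, if and only if Σ xᶦ₁ ⊗ T(xᶦ₂)ε(yᵢ) = Σ xᶦ ⊗ yᵢ for every such element. -/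
noncomputable section
open TensorProduct LinearMap

/-!
Let `f : B ⊗ B → B ⊗ (B ⊗ B)`, `x ⊗ y ↦ x₁ ⊗ (x₂ ⊗ y)`. Then `Δ ∘ p = (id ⊗ p) ∘ f` and
`(id ⊗ q) ∘ f = id`, where `p(x ⊗ y) = x ε(y)` and `q(x ⊗ y) = ε(x) y`. By coassociativity `f`
intertwines the coaction on `B ⊗ B` with the one on `B ⊗ (B ⊗ B)`, so it sends `B ⧄ B` into the
coinvariants of `B ⊗ (B ⊗ B)`, which by flatness of `B` are `B ⊗ (B ⧄ B)`. Hence `T ∘ p = q` on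
`B ⧄ B` gives `(id ⊗ T) Δ p(z) = (id ⊗ q) f(z) = z`, which in turn forces `p` to be injective;
conversely `q` composed with a linear left inverse of an injective `p` is such a `T`.
-/

open Coalgebra

section
variable {k B : Type*} [CommRing k] [Ring B] [Bialgebra k B]

@[simp] lemma pB0_tmul (x y : B) : pB0 k B (x ⊗ₜ y) = counit (R := k) y • x := by
  simp [pB0]

@[simp] lemma qB0_tmul (x y : B) : qB0 k B (x ⊗ₜ y) = counit (R := k) x • y := by
  simp [qB0]

@[simp] lemma unitR_apply (z : B ⊗[k] B) : unitR k B z = z ⊗ₜ (1 : B) := by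
  simp [unitR]

lemma pB0_comul (x : B) : pB0 k B (comul (R := k) x) = x := by
  change TensorProduct.rid k B (lTensor B counit (comul x)) = x
  rw [lTensor_counit_comul, TensorProduct.rid_tmul, one_smul]

variable (k B) in
def comulTensorLeft : B ⊗[k] B →ₗ[k] B ⊗[k] (B ⊗[k] B) :=
  (TensorProduct.assoc k B B B).toLinearMap ∘ₗ rTensor B comul

@[simp] lemma comulTensorLeft_tmul (x y : B) :
    comulTensorLeft k B (x ⊗ₜ y) = TensorProduct.assoc k B B B (comul (R := k) x ⊗ₜ y) := rfl

lemma lTensor_pB0_assoc_tmul (c : B ⊗[k] B) (y : B) :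
    lTensor B (pB0 k B) (TensorProduct.assoc k B B B (c ⊗ₜ y)) = counit (R := k) y • c := by
  induction c using TensorProduct.induction_on with
  | zero => simp
  | tmul a b => simp [TensorProduct.tmul_smul]
  | add u v hu hv => simp_all [add_tmul]

lemma lTensor_qB0_assoc_tmul (c : B ⊗[k] B) (y : B) :
    lTensor B (qB0 k B) (TensorProduct.assoc k B B B (c ⊗ₜ y)) = pB0 k B c ⊗ₜ y := by
  induction c using TensorProduct.induction_on with
  | zero => simp
  | tmul a b => simp [TensorProduct.smul_tmul]
  | add u v hu hv => simp_all [add_tmul]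

lemma comul_comp_pB0 :
    comul ∘ₗ pB0 k B = lTensor B (pB0 k B) ∘ₗ comulTensorLeft k B := by
  ext x y
  simp [lTensor_pB0_assoc_tmul]

lemma lTensor_qB0_comp_comulTensorLeft :
    lTensor B (qB0 k B) ∘ₗ comulTensorLeft k B = LinearMap.id := by
  ext x y
  simp [lTensor_qB0_assoc_tmul, pB0_comul]

variable (k B) in
def interleaveMul : (B ⊗[k] B) ⊗[k] (B ⊗[k] B) →ₗ[k] (B ⊗[k] B) ⊗[k] B :=
  TensorProduct.map LinearMap.id (LinearMap.mul' k B) ∘ₗ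
    (TensorProduct.tensorTensorTensorComm k B B B B).toLinearMap

@[simp] lemma interleaveMul_tmul (a b u v : B) :
    interleaveMul k B ((a ⊗ₜ b) ⊗ₜ (u ⊗ₜ v)) = (a ⊗ₜ u) ⊗ₜ (b * v) := by
  simp [interleaveMul]

lemma coact_tmul (x y : B) :
    coact k B (x ⊗ₜ y) = interleaveMul k B (comul (R := k) x ⊗ₜ comul (R := k) y) := rfl

lemma lTensor_coact_assoc_tmul (c : B ⊗[k] B) (y : B) :
    lTensor B (coact k B) (TensorProduct.assoc k B B B (c ⊗ₜ y)) =
      lTensor B (interleaveMul k B) (TensorProduct.assoc k B (B ⊗[k] B) (B ⊗[k] B)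
        (lTensor B comul c ⊗ₜ comul (R := k) y)) := by
  induction c using TensorProduct.induction_on with
  | zero => simp
  | tmul a b => simp [coact_tmul]
  | add u v hu hv => simp_all [add_tmul]

lemma assoc_rTensor_comulTensorLeft_interleaveMul (d e : B ⊗[k] B) :
    TensorProduct.assoc k B (B ⊗[k] B) B
        (rTensor B (comulTensorLeft k B) (interleaveMul k B (d ⊗ₜ e))) =
      lTensor B (interleaveMul k B) (TensorProduct.assoc k B (B ⊗[k] B) (B ⊗[k] B)
        (TensorProduct.assoc k B B B (rTensor B comul d) ⊗ₜ e)) := by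
  induction d using TensorProduct.induction_on with
  | zero => simp
  | add u v hu hv => simp_all [add_tmul]
  | tmul p q =>
    induction e using TensorProduct.induction_on with
    | zero => simp
    | add u v hu hv => simp_all [tmul_add]
    | tmul u v =>
      simp only [interleaveMul_tmul, rTensor_tmul, comulTensorLeft_tmul]
      induction comul (R := k) p using TensorProduct.induction_on with
      | zero => simp
      | add s t hs ht => simp_all [add_tmul]
      | tmul a b => simp

lemma lTensor_coact_comp_comulTensorLeft :
    lTensor B (coact k B) ∘ₗ comulTensorLeft k B =
      (TensorProduct.assoc k B (B ⊗[k] B) B).toLinearMap ∘ₗ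
        rTensor B (comulTensorLeft k B) ∘ₗ coact k B := by
  refine TensorProduct.ext' fun x y => ?_
  simp only [LinearMap.coe_comp, LinearEquiv.coe_coe, Function.comp_apply, comulTensorLeft_tmul,
    lTensor_coact_assoc_tmul, coact_tmul, assoc_rTensor_comulTensorLeft_interleaveMul,
    coassoc_apply]

lemma lTensor_unitR_comp_comulTensorLeft :
    lTensor B (unitR k B) ∘ₗ comulTensorLeft k B =
      (TensorProduct.assoc k B (B ⊗[k] B) B).toLinearMap ∘ₗ
        rTensor B (comulTensorLeft k B) ∘ₗ unitR k B := by
  refine TensorProduct.ext' fun x y => ?_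
  simp only [LinearMap.coe_comp, LinearEquiv.coe_coe, Function.comp_apply, comulTensorLeft_tmul,
    unitR_apply, rTensor_tmul]
  induction comul (R := k) x using TensorProduct.induction_on with
  | zero => simp
  | add s t hs ht => simp_all [add_tmul]
  | tmul a b => simp

lemma comulTensorLeft_mem_range_lTensor_coinv [Module.Flat k B] {z : B ⊗[k] B}
    (hz : z ∈ coinv k B) :
    comulTensorLeft k B z ∈ LinearMap.range (lTensor B (coinv k B).subtype) := by
  have hz' : coact k B z = unitR k B z := hz
  have hcoinv : lTensor B (coact k B) (comulTensorLeft k B z) =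
      lTensor B (unitR k B) (comulTensorLeft k B z) := by
    rw [← LinearMap.comp_apply, lTensor_coact_comp_comulTensorLeft, ← LinearMap.comp_apply,
      lTensor_unitR_comp_comulTensorLeft]
    simp only [LinearMap.comp_apply, hz']
  exact Module.Flat.eqLocus_lTensor_eq k B (coact k B) (unitR k B) ▸ hcoinv

lemma map_id_comul_pB0_of_forall_coinv [Module.Flat k B] {T : B →ₗ[k] B}
    (hT : ∀ z ∈ coinv k B, T (pB0 k B z) = qB0 k B z) {z : B ⊗[k] B} (hz : z ∈ coinv k B) :
    TensorProduct.map LinearMap.id T (comul (R := k) (pB0 k B z)) = z := by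
  obtain ⟨u, hu⟩ := comulTensorLeft_mem_range_lTensor_coinv hz
  have hTq : T ∘ₗ pB0 k B ∘ₗ (coinv k B).subtype = qB0 k B ∘ₗ (coinv k B).subtype :=
    LinearMap.ext fun w => hT w w.2
  calc TensorProduct.map LinearMap.id T (comul (R := k) (pB0 k B z))
      = lTensor B T (lTensor B (pB0 k B) (comulTensorLeft k B z)) := by
        rw [← LinearMap.comp_apply comul, comul_comp_pB0]; rfl
    _ = lTensor B (T ∘ₗ pB0 k B ∘ₗ (coinv k B).subtype) u := by
        rw [← hu, lTensor_comp_apply, lTensor_comp_apply]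
    _ = lTensor B (qB0 k B) (comulTensorLeft k B z) := by
        rw [hTq, lTensor_comp_apply, hu]
    _ = z := LinearMap.congr_fun lTensor_qB0_comp_comulTensorLeft z

lemma injective_pB_of_forall_coinv (T : B →ₗ[k] B)
    (hT : ∀ z ∈ coinv k B, TensorProduct.map LinearMap.id T (comul (R := k) (pB0 k B z)) = z) :
    Function.Injective (pB k B) := by
  intro z₁ z₂ h
  apply Subtype.ext
  rw [← hT z₁ z₁.2, ← hT z₂ z₂.2]
  exact congrArg _ (congrArg _ h)

end

lemma exists_forall_coinv_of_injective_pB {k B : Type*} [Field k] [Ring B] [Bialgebra k B]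
    (hinj : Function.Injective (pB k B)) :
    ∃ T : B →ₗ[k] B, ∀ z ∈ coinv k B, T (pB0 k B z) = qB0 k B z := by
  obtain ⟨g, hg⟩ := (pB k B).exists_leftInverse_of_injective (LinearMap.ker_eq_bot.mpr hinj)
  exact ⟨qB0 k B ∘ₗ (coinv k B).subtype ∘ₗ g, fun z hz =>
    congrArg (fun w : coinv k B => qB0 k B w) (LinearMap.congr_fun hg ⟨z, hz⟩)⟩

theorem stmt9 (k B : Type*) [Field k] [Ring B] [Bialgebra k B] :
    (Function.Injective (pB k B) ↔
      ∃ T : B →ₗ[k] B, ∀ z ∈ coinv k B, T (pB0 k B z) = qB0 k B z) ∧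
    (Function.Injective (pB k B) ↔
      ∃ T : B →ₗ[k] B, ∀ z ∈ coinv k B,
        (TensorProduct.map LinearMap.id T) (Coalgebra.comul (R := k) (pB0 k B z)) = z) := by
  refine ⟨⟨exists_forall_coinv_of_injective_pB, fun ⟨T, hT⟩ => ?_⟩,
    ⟨fun hinj => ?_, fun ⟨T, hT⟩ => injective_pB_of_forall_coinv T hT⟩⟩
  · exact injective_pB_of_forall_coinv T fun _ hz => map_id_comul_pB0_of_forall_coinv hT hz
  · obtain ⟨T, hT⟩ := exists_forall_coinv_of_injective_pB hinj
    exact ⟨T, fun _ hz => map_id_comul_pB0_of_forall_coinv hT hz⟩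
end
end

section
/- Let M be a regular monoid (for every x ∈ M there exists x† ∈ M with x·x†·x = x) and let B = kM be the monoid bialgebra. Then for every x ∈ M one has 1 ⊘ x = x† ⊘ 1 in B ⊘ B, and hence i_B : B → B ⊘ B is surjective. -/
/-! If `a` and `c` are grouplike with `a c a = a`, then both `Δ(a - 1)` and `Δ(c a - 1)` lie in
`Δ(ker ε)`, and `x ⊗ a - x c ⊗ 1 = (x c ⊗ 1) Δ(a - 1) - (x ⊗ a) Δ(c a - 1)`. Hence `x ⊘ a = x c ⊘ 1`
lies in the image of `i_B`. When the grouplike regular elements span `B`, the simple tensors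
`x ⊗ a` span `B ⊗ B`, so `i_B` is surjective. -/

noncomputable section
open TensorProduct LinearMap

open Coalgebra

section

variable {k B : Type*} [CommRing k] [Ring B] [Bialgebra k B]

lemma iB_apply (b : B) : iB k B b = omk k (b ⊗ₜ[k] (1 : B)) := rfl

lemma mul_comul_mem_oslashRel (m : B ⊗[k] B) {b : B} (hb : counit (R := k) b = 0) :
    m * comul (R := k) b ∈ oslashRel k B :=
  Submodule.subset_span ⟨m, b, hb, rfl⟩

lemma mul_comul_sub_one_mem_oslashRel (m : B ⊗[k] B) {a : B} (ha : IsGroupLikeElem k a) :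
    m * comul (R := k) (a - 1) ∈ oslashRel k B :=
  mul_comul_mem_oslashRel m (by simp [ha])

theorem omk_tmul_eq_iB_mul (x : B) {a c : B} (ha : IsGroupLikeElem k a)
    (hc : IsGroupLikeElem k c) (hac : a * c * a = a) :
    omk k (x ⊗ₜ[k] a) = iB k B (x * c) := by
  have hca := hc.mul ha
  have key : x ⊗ₜ[k] a - (x * c) ⊗ₜ[k] (1 : B)
      = ((x * c) ⊗ₜ[k] (1 : B)) * comul (R := k) (a - 1)
        - (x ⊗ₜ[k] a) * comul (R := k) (c * a - 1) := by
    simp only [map_sub, ha.comul_eq_tmul_self, hca.comul_eq_tmul_self, Bialgebra.comul_one,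
      mul_sub, Algebra.TensorProduct.tmul_mul_tmul, mul_one, one_mul, ← mul_assoc, hac]
    abel
  rw [iB_apply, Submodule.Quotient.eq, key]
  exact sub_mem (mul_comul_sub_one_mem_oslashRel _ ha) (mul_comul_sub_one_mem_oslashRel _ hca)

theorem iB_surjective_of_span_eq_top {S : Set B} (hS : Submodule.span k S = ⊤)
    (hreg : ∀ a ∈ S, IsGroupLikeElem k a ∧ ∃ c, IsGroupLikeElem k c ∧ a * c * a = a) :
    Function.Surjective (iB k B) := by
  let P := (LinearMap.range (iB k B)).comap (oslashRel k B).mkQ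
  have hP : ∀ x y : B, x ⊗ₜ[k] y ∈ P := by
    intro x y
    have hSP : Submodule.span k S ≤ P.comap (TensorProduct.mk k B B x) := by
      refine Submodule.span_le.mpr fun a ha => ?_
      obtain ⟨hga, c, hgc, hac⟩ := hreg a ha
      exact ⟨x * c, (omk_tmul_eq_iB_mul x hga hgc hac).symm⟩
    exact hSP (hS ▸ Submodule.mem_top)
  intro z
  obtain ⟨m, rfl⟩ := Submodule.Quotient.mk_surjective _ z
  exact TensorProduct.induction_on (motive := (· ∈ P)) m (zero_mem P) hP fun _ _ => add_mem

end

/-- The monoid bialgebra `kM` is encoded as a bialgebra `B` together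
with a multiplicative map `φ : M →* B` whose image consists of grouplike elements and
forms a `k`-basis of `B`. -/
theorem stmt12 (k B M : Type*) [Field k] [Ring B] [Bialgebra k B] [Monoid M]
    (φ : M →* B)
    (hΔ : ∀ g : M, Coalgebra.comul (R := k) (φ g) = φ g ⊗ₜ[k] φ g)
    (hε : ∀ g : M, Coalgebra.counit (R := k) (φ g) = 1)
    (hbasis : ∃ bas : Module.Basis M k B, ∀ g : M, bas g = φ g)
    (hreg : ∀ x : M, ∃ d : M, x * d * x = x) :
    (∀ x d : M, x * d * x = x →
      omk k ((1 : B) ⊗ₜ[k] φ x) = omk k (φ d ⊗ₜ[k] (1 : B))) ∧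
    Function.Surjective (iB k B) := by
  have hgl (g : M) : IsGroupLikeElem k (φ g) := ⟨hε g, hΔ g⟩
  have hφreg {x d : M} (hd : x * d * x = x) : φ x * φ d * φ x = φ x := by
    rw [← map_mul, ← map_mul, hd]
  refine ⟨fun x d hd => ?_, ?_⟩
  · simpa [iB_apply] using omk_tmul_eq_iB_mul 1 (hgl x) (hgl d) (hφreg hd)
  · obtain ⟨bas, hbas⟩ := hbasis
    refine iB_surjective_of_span_eq_top (S := Set.range φ) ?_ ?_
    · rw [← bas.span_eq, show Set.range bas = Set.range φ from congrArg Set.range (funext hbas)]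
    · rintro _ ⟨x, rfl⟩
      obtain ⟨d, hd⟩ := hreg x
      exact ⟨hgl x, φ d, hgl d, hφreg hd⟩
end
end

section
/- Fix n ∈ ℕ and let M = ⟨x | x^{n+1} = x^n⟩ be the monoid presented by one generator x with relation x^{n+1} = x^n. Then in the monoid bialgebra kM one has Id^{*(n+1)} = Id^{*n} in the convolution algebra End_k(kM), so both Id and u∘ε are two-sided n-antipodes; moreover n is minimal with this property, so kM is an n-Hopf algebra. -/
noncomputable section
open TensorProduct LinearMap

/-- The monoid ⟨x | x^{n+1} = x^n⟩, presented as a quotient of the free monoid on one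
generator (realised as `Multiplicative ℕ`) by the congruence generated by the relation
x^{n+1} = x^n. -/
abbrev PresM (n : ℕ) : Type :=
  (conGen (fun a b : Multiplicative ℕ =>
    a = Multiplicative.ofAdd (n + 1) ∧ b = Multiplicative.ofAdd n)).Quotient

/-!
On a grouplike element `b` with `ε b = 1` the convolution power `Id^{*m}` acts as `b ↦ b ^ m`.
Since every element `g` of `⟨x | x^{n+1} = x^n⟩` satisfies `g^{n+1} = g^n`, all the claimed
identities hold on the grouplike basis. For minimality, if `S * Id^{*(m+1)} = Id^{*m}` with
`m < n`, evaluating at `x` gives `S(x) x^{m+1} = x^m`; but `x^m` is not a multiple of `x^{m+1}`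
in the monoid, so the `x^m`-coordinate of anything in `B x^{m+1}` vanishes.
-/

namespace PresM

variable {n : ℕ}

/-- The generator `x`. -/
def gen (n : ℕ) : PresM n := ((Multiplicative.ofAdd 1 : Multiplicative ℕ) : PresM n)

lemma coe_ofAdd (a : ℕ) : ((Multiplicative.ofAdd a : Multiplicative ℕ) : PresM n) = gen n ^ a := by
  have h : (Multiplicative.ofAdd a : Multiplicative ℕ) = Multiplicative.ofAdd 1 ^ a := by
    rw [← ofAdd_nsmul, smul_eq_mul, mul_one]
  rw [h]
  rfl

lemma exists_eq_gen_pow (g : PresM n) : ∃ a, g = gen n ^ a :=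
  Con.induction_on g fun x => ⟨x.toAdd, by rw [← coe_ofAdd, ofAdd_toAdd]⟩

lemma gen_pow_succ : gen n ^ (n + 1) = gen n ^ n := by
  rw [← coe_ofAdd, ← coe_ofAdd]
  exact (Con.eq _).mpr (ConGen.Rel.of _ _ ⟨rfl, rfl⟩)

lemma gen_pow_of_le {p : ℕ} (hp : n ≤ p) : gen n ^ p = gen n ^ n := by
  induction p, hp using Nat.le_induction with
  | base => rfl
  | succ p _ ih => rw [pow_succ, ih, ← pow_succ, gen_pow_succ]

lemma pow_succ_eq_pow (g : PresM n) : g ^ (n + 1) = g ^ n := by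
  obtain ⟨a, rfl⟩ := exists_eq_gen_pow g
  rcases Nat.eq_zero_or_pos a with rfl | ha
  · simp
  · rw [← pow_mul, ← pow_mul, gen_pow_of_le (p := a * (n + 1)) (by nlinarith),
      gen_pow_of_le (p := a * n) (by nlinarith)]

/-- Respects the relation `x^{n+1} = x^n`, so it detects distinct powers `x^a`, `x^b` with
`a, b ≤ n`. -/
def truncCon (n : ℕ) : Con (Multiplicative ℕ) where
  r a b := min a.toAdd n = min b.toAdd n
  iseqv := ⟨fun _ => rfl, fun h => h.symm, fun h h' => h.trans h'⟩
  mul' := by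
    intro a b c d h h'
    simp only [toAdd_mul] at *
    omega

lemma min_eq_of_gen_pow_eq {a b : ℕ} (h : gen n ^ a = gen n ^ b) : min a n = min b n := by
  rw [← coe_ofAdd, ← coe_ofAdd, Con.eq] at h
  have hle : conGen (fun a b : Multiplicative ℕ =>
      a = Multiplicative.ofAdd (n + 1) ∧ b = Multiplicative.ofAdd n) ≤ truncCon n := by
    rw [Con.conGen_le]
    rintro _ _ ⟨hx, hy⟩
    rw [hx, hy]
    show min (n + 1) n = min n n
    omega
  exact hle h

lemma mul_gen_pow_succ_ne {m : ℕ} (hm : m < n) (g : PresM n) :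
    g * gen n ^ (m + 1) ≠ gen n ^ m := by
  obtain ⟨a, rfl⟩ := exists_eq_gen_pow g
  intro h
  rw [← pow_add] at h
  have := min_eq_of_gen_pow_eq h
  omega

end PresM

section Grouplike

variable {k B A : Type*} [CommRing k] [Ring B] [Bialgebra k B] [Ring A] [Algebra k A] {b : B}

lemma conv_apply_of_comul_eq (hb : Coalgebra.comul (R := k) b = b ⊗ₜ[k] b) (f g : B →ₗ[k] A) :
    conv f g b = f b * g b := by
  simp only [conv, coe_comp, Function.comp_apply, hb, map_tmul, mul'_apply]

lemma convUnit_apply_of_counit_eq_one (hb : Coalgebra.counit (R := k) b = 1) :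
    convUnit k B A b = 1 := by
  simp only [convUnit, coe_comp, Function.comp_apply, hb, Algebra.linearMap_apply, map_one]

lemma IsGroupLikeElem.convPow_apply (hb : IsGroupLikeElem k b) (m : ℕ) :
    convPow k B m b = b ^ m := by
  induction m with
  | zero => rw [pow_zero]; exact convUnit_apply_of_counit_eq_one hb.counit_eq_one
  | succ m ih => rw [convPow, conv_apply_of_comul_eq hb.comul_eq_tmul_self, ih, id_apply, pow_succ]

end Grouplike

lemma Module.Basis.linearMap_apply_ne_of_forall_ne {ι R M : Type*} [Semiring R] [Nontrivial R]
    [AddCommMonoid M] [Module R M] (bas : Basis ι R M) (L : M →ₗ[R] M) (σ : ι → ι)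
    (hL : ∀ i, L (bas i) = bas (σ i)) {j : ι} (hj : ∀ i, σ i ≠ j) (y : M) : L y ≠ bas j := by
  intro h
  have hzero : bas.coord j ∘ₗ L = 0 := bas.ext fun i => by
    rw [comp_apply, hL, Basis.coord_apply, Basis.repr_self, Finsupp.single_eq_of_ne (hj i).symm,
      LinearMap.zero_apply]
  have := LinearMap.congr_fun hzero y
  rw [comp_apply, h, Basis.coord_apply, Basis.repr_self, Finsupp.single_eq_same,
    LinearMap.zero_apply] at this
  exact one_ne_zero this

section Minimality

variable {M k B : Type*} [Monoid M] [CommRing k] [Nontrivial k] [Ring B] [Bialgebra k B]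
  (φ : M →* B) (bas : Module.Basis M k B) (hbas : ∀ g, bas g = φ g) {x : M}
  (hx : IsGroupLikeElem k (φ x))
include hbas hx

lemma not_exists_conv_convPow_succ_eq {m : ℕ} (hmul : ∀ g, g * x ^ (m + 1) ≠ x ^ m) :
    ¬ ∃ S : B →ₗ[k] B, conv S (convPow k B (m + 1)) = convPow k B m := by
  rintro ⟨S, hS⟩
  have h := LinearMap.congr_fun hS (φ x)
  rw [conv_apply_of_comul_eq hx.comul_eq_tmul_self, hx.convPow_apply, hx.convPow_apply,
    ← map_pow, ← map_pow, ← hbas (x ^ m)] at h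
  refine bas.linearMap_apply_ne_of_forall_ne (mulRight k (φ (x ^ (m + 1))))
    (· * x ^ (m + 1)) (fun g => ?_) hmul (S (φ x)) h
  rw [hbas, hbas, mulRight_apply, map_mul]

lemma not_exists_convPow_succ_conv_eq {m : ℕ} (hmul : ∀ g, x ^ (m + 1) * g ≠ x ^ m) :
    ¬ ∃ S : B →ₗ[k] B, conv (convPow k B (m + 1)) S = convPow k B m := by
  rintro ⟨S, hS⟩
  have h := LinearMap.congr_fun hS (φ x)
  rw [conv_apply_of_comul_eq hx.comul_eq_tmul_self, hx.convPow_apply, hx.convPow_apply,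
    ← map_pow, ← map_pow, ← hbas (x ^ m)] at h
  refine bas.linearMap_apply_ne_of_forall_ne (mulLeft k (φ (x ^ (m + 1))))
    (x ^ (m + 1) * ·) (fun g => ?_) hmul (S (φ x)) h
  rw [hbas, hbas, mulLeft_apply, map_mul]

end Minimality

/-- The monoid bialgebra `k⟨x | x^{n+1} = x^n⟩` is encoded as a bialgebra
`B` with a basis of grouplike elements indexed multiplicatively by `PresM n`. -/
theorem stmt13 (n : ℕ) (k B : Type*) [Field k] [Ring B] [Bialgebra k B]
    (φ : PresM n →* B)
    (hΔ : ∀ g : PresM n, Coalgebra.comul (R := k) (φ g) = φ g ⊗ₜ[k] φ g)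
    (hε : ∀ g : PresM n, Coalgebra.counit (R := k) (φ g) = 1)
    (hbasis : ∃ bas : Module.Basis (PresM n) k B, ∀ g : PresM n, bas g = φ g) :
    convPow k B (n + 1) = convPow k B n ∧
    conv LinearMap.id (convPow k B (n + 1)) = convPow k B n ∧
    conv (convPow k B (n + 1)) LinearMap.id = convPow k B n ∧
    conv (convUnit k B B) (convPow k B (n + 1)) = convPow k B n ∧
    conv (convPow k B (n + 1)) (convUnit k B B) = convPow k B n ∧
    (∀ m : ℕ, (∃ S : B →ₗ[k] B, conv S (convPow k B (m + 1)) = convPow k B m) → n ≤ m) ∧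
    (∀ m : ℕ, (∃ S : B →ₗ[k] B, conv (convPow k B (m + 1)) S = convPow k B m) → n ≤ m) := by
  obtain ⟨bas, hbas⟩ := hbasis
  have hgl : ∀ g, IsGroupLikeElem k (φ g) := fun g => ⟨hε g, hΔ g⟩
  have hsat : ∀ g, φ g ^ (n + 1) = φ g ^ n := fun g => by
    rw [← map_pow, ← map_pow, PresM.pow_succ_eq_pow]
  have ext : ∀ f f' : B →ₗ[k] B, (∀ g, f (φ g) = f' (φ g)) → f = f' := fun f f' h =>
    bas.ext fun g => by rw [hbas]; exact h g
  refine ⟨?_, ?_, ?_, ?_, ?_, ?_, ?_⟩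
  iterate 5
    refine ext _ _ fun g => ?_
    simp only [conv_apply_of_comul_eq (hΔ g), (hgl g).convPow_apply,
      convUnit_apply_of_counit_eq_one (hε g), id_apply, one_mul, mul_one, hsat, ← pow_succ,
      ← pow_succ']
  · exact fun m hS => not_lt.mp fun hm => not_exists_conv_convPow_succ_eq φ bas hbas (hgl _)
      (PresM.mul_gen_pow_succ_ne hm) hS
  · exact fun m hS => not_lt.mp fun hm => not_exists_convPow_succ_conv_eq φ bas hbas (hgl _)
      (fun g => mul_comm g _ ▸ PresM.mul_gen_pow_succ_ne hm g) hS
end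
end

section
/- Let M be a commutative regular monoid, with a choice, for each x ∈ M, of x† ∈ M satisfying x†·x² = x. Then the monoid bialgebra kM is a 1-Hopf algebra: the linear map S determined by S(x) = x† satisfies S * Id^{*2} = Id^{*1} = Id in convolution, and if M is not a group then kM admits no antipode (is not a Hopf algebra), so 1 is minimal. -/
noncomputable section
open TensorProduct LinearMap

/-! On a grouplike element `b` the convolution of two maps is the product of their values, so
`Id^{*n}` sends the basis element `x` to `x ^ n`, and `S * Id^{*2}` sends it to `x† x² = x`.
A left convolution inverse `S'` of `Id` gives `S'(x) · x = 1`; expanding `S'(x)` in the basis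
`M`, some basis element `g` must satisfy `g x = 1`, so every element of `M` is a unit. -/

section Convolution

variable {k B : Type*} [CommRing k] [Ring B] [Bialgebra k B]

lemma conv_apply_of_isGroupLikeElem {A : Type*} [Ring A] [Algebra k A] (f g : B →ₗ[k] A)
    {b : B} (hb : IsGroupLikeElem k b) : conv f g b = f b * g b := by
  simp [conv, hb.comul_eq_tmul_self]

lemma convPow_apply_of_isGroupLikeElem {b : B} (hb : IsGroupLikeElem k b) (n : ℕ) :
    convPow k B n b = b ^ n := by
  induction n with
  | zero => simp [convPow, convUnit, hb.counit_eq_one]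
  | succ n ih => rw [convPow, conv_apply_of_isGroupLikeElem _ _ hb, ih, id_apply, pow_succ]

lemma convPow_one : convPow k B 1 = LinearMap.id := by
  -- `conv` and `convUnit` are Mathlib's convolution product and unit on `WithConv (B →ₗ[k] B)`,
  -- whose `one_mul` is the counit axiom `(ε ⊗ id) ∘ Δ = id`.
  change ((1 : WithConv (B →ₗ[k] B)) * WithConv.toConv LinearMap.id).ofConv = _
  rw [one_mul, WithConv.ofConv_toConv]

end Convolution

lemma Module.Basis.exists_mul_eq_one_of_mul_eq_one {k B M : Type*} [CommRing k] [Nontrivial k]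
    [Ring B] [Algebra k B] [Monoid M] {φ : M →* B} (bas : Module.Basis M k B)
    (hbas : ∀ g, bas g = φ g) {a : B} {x : M} (h : a * φ x = 1) : ∃ g, g * x = 1 := by
  by_contra! hx
  have hcoord : bas.coord 1 ∘ₗ LinearMap.mulRight k (φ x) = 0 := bas.ext fun g => by
    rw [comp_apply, mulRight_apply, hbas, ← map_mul, ← hbas, Module.Basis.coord_apply,
      Module.Basis.repr_self, Finsupp.single_eq_of_ne' (hx g), LinearMap.zero_apply]
  have := congr($hcoord a)
  simp [h, ← map_one φ, ← hbas 1] at this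

section MonoidBialgebra

variable {k B M : Type*} [CommRing k] [Ring B] [Bialgebra k B] [Monoid M] {φ : M →* B}

lemma conv_convPow_two_eq_id_of_mul_sq_eq_self (bas : Module.Basis M k B)
    (hbas : ∀ g, bas g = φ g) (hφ : ∀ g, IsGroupLikeElem k (φ g)) (dag : M → M)
    (hdag : ∀ x : M, dag x * (x * x) = x) (S : B →ₗ[k] B) (hS : ∀ x : M, S (φ x) = φ (dag x)) :
    conv S (convPow k B 2) = LinearMap.id :=
  bas.ext fun x => by
    rw [hbas, conv_apply_of_isGroupLikeElem _ _ (hφ x), convPow_apply_of_isGroupLikeElem (hφ x),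
      hS, sq, ← map_mul, ← map_mul, hdag, id_apply]

lemma isUnit_of_conv_id_eq_convUnit [Nontrivial k] [IsDedekindFiniteMonoid M]
    (bas : Module.Basis M k B) (hbas : ∀ g, bas g = φ g) (hφ : ∀ g, IsGroupLikeElem k (φ g))
    {S' : B →ₗ[k] B} (hS' : conv S' LinearMap.id = convUnit k B B) (x : M) : IsUnit x := by
  have hinv : S' (φ x) * φ x = 1 := by
    simpa [conv_apply_of_isGroupLikeElem _ _ (hφ x), convUnit, (hφ x).counit_eq_one]
      using congr($hS' (φ x))
  obtain ⟨g, hg⟩ := bas.exists_mul_eq_one_of_mul_eq_one hbas hinv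
  exact IsUnit.of_mul_eq_one_right g hg

end MonoidBialgebra

/-- The monoid bialgebra `kM` is encoded as a bialgebra `B` with a multiplicative basis
`φ : M →* B` of grouplike elements, and `dag x` is `x†`. -/
theorem stmt14 (k B M : Type*) [Field k] [Ring B] [Bialgebra k B] [CommMonoid M]
    (φ : M →* B)
    (hΔ : ∀ g : M, Coalgebra.comul (R := k) (φ g) = φ g ⊗ₜ[k] φ g)
    (hε : ∀ g : M, Coalgebra.counit (R := k) (φ g) = 1)
    (hbasis : ∃ bas : Module.Basis M k B, ∀ g : M, bas g = φ g)
    (dag : M → M) (hdag : ∀ x : M, dag x * (x * x) = x)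
    (S : B →ₗ[k] B) (hS : ∀ x : M, S (φ x) = φ (dag x)) :
    conv S (convPow k B 2) = convPow k B 1 ∧
    convPow k B 1 = LinearMap.id ∧
    ((¬ ∀ x : M, IsUnit x) →
      ¬ ∃ S' : B →ₗ[k] B, conv S' LinearMap.id = convUnit k B B ∧
        conv LinearMap.id S' = convUnit k B B) := by
  obtain ⟨bas, hbas⟩ := hbasis
  have hφ (g : M) : IsGroupLikeElem k (φ g) := ⟨hε g, hΔ g⟩
  refine ⟨?_, convPow_one, ?_⟩
  · rw [convPow_one]
    exact conv_convPow_two_eq_id_of_mul_sq_eq_self bas hbas hφ dag hdag S hS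
  · rintro hM ⟨S', hS', -⟩
    exact hM (isUnit_of_conv_id_eq_convUnit bas hbas hφ hS')
end
end

section
/- Let B = kM be a monoid bialgebra. Then B ⧄ B is spanned over k by the elements g ⊗ h with g, h ∈ M and gh = 1, and the image of p_B : B ⧄ B → B, Σ xᶦ ⊗ yᵢ ↦ Σ xᶦ ε(yᵢ), equals k·M^ℓ where M^ℓ = {g ∈ M : ∃ h ∈ M, gh = 1} is the submonoid of left units. -/
noncomputable section
open TensorProduct LinearMap

/-! In the basis `φ g ⊗ φ h` of `B ⊗ B`, the coaction sends `φ g ⊗ φ h` to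
`(φ g ⊗ φ h) ⊗ φ (g h)`, again a basis vector of `(B ⊗ B) ⊗ B`. Comparing the coefficients at
`((g, h), g h)` in `coact z = z ⊗ 1` shows that a coinvariant `z` has no component along
`φ g ⊗ φ h` unless `g h = 1`, and those basis vectors are coinvariant. Applying
`x ⊗ y ↦ x ε(y)` to them gives exactly the `φ g` with `g` a left unit. -/

namespace MonoidBialgebra

variable {k B M : Type*} [CommRing k] [Ring B] [Bialgebra k B] [Monoid M]

lemma unitR_apply (z : B ⊗[k] B) : unitR k B z = z ⊗ₜ[k] 1 := by
  simp [unitR]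

lemma coact_tmul {a b : B} (ha : Coalgebra.comul (R := k) a = a ⊗ₜ a)
    (hb : Coalgebra.comul (R := k) b = b ⊗ₜ b) :
    coact k B (a ⊗ₜ b) = (a ⊗ₜ b) ⊗ₜ (a * b) := by
  simp [coact, ha, hb]

lemma pB0_tmul (a b : B) : pB0 k B (a ⊗ₜ b) = Coalgebra.counit (R := k) b • a := by
  simp [pB0]

lemma range_pB_eq_map : range (pB k B) = (coinv k B).map (pB0 k B) := by
  rw [pB, range_comp, Submodule.range_subtype]

lemma image_pB0_tmul_of_mul_eq_one (φ : M →* B)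
    (hε : ∀ g : M, Coalgebra.counit (R := k) (φ g) = 1) :
    pB0 k B '' {z : B ⊗[k] B | ∃ g h : M, g * h = 1 ∧ z = φ g ⊗ₜ[k] φ h} =
      φ '' {g : M | ∃ h : M, g * h = 1} := by
  ext x
  constructor
  · rintro ⟨_, ⟨g, h, hgh, rfl⟩, rfl⟩
    exact ⟨g, ⟨h, hgh⟩, by simp [pB0_tmul, hε]⟩
  · rintro ⟨g, ⟨h, hgh⟩, rfl⟩
    exact ⟨_, ⟨g, h, hgh, rfl⟩, by simp [pB0_tmul, hε]⟩

variable (φ : M →* B) (bas : Module.Basis M k B) (hbas : ∀ g, bas g = φ g)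
  (hΔ : ∀ g : M, Coalgebra.comul (R := k) (φ g) = φ g ⊗ₜ[k] φ g)
include hbas hΔ

lemma repr_coact_apply (z : B ⊗[k] B) (p : M × M) :
    ((bas.tensorProduct bas).tensorProduct bas).repr (coact k B z) (p, p.1 * p.2) =
      (bas.tensorProduct bas).repr z p := by
  suffices h : Finsupp.lapply (p, p.1 * p.2) ∘ₗ
      ((bas.tensorProduct bas).tensorProduct bas).repr.toLinearMap ∘ₗ coact k B =
      Finsupp.lapply p ∘ₗ (bas.tensorProduct bas).repr.toLinearMap from congr($h z)
  refine (bas.tensorProduct bas).ext fun r => ?_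
  have hr : coact k B (bas.tensorProduct bas r) =
      ((bas.tensorProduct bas).tensorProduct bas) (r, r.1 * r.2) := by
    simp [Module.Basis.tensorProduct_apply', hbas, coact_tmul (hΔ _) (hΔ _)]
  simp only [coe_comp, LinearEquiv.coe_coe, Function.comp_apply, hr,
    Module.Basis.repr_self, Finsupp.lapply_apply]
  by_cases hrp : r = p
  · simp [hrp]
  · rw [Finsupp.single_eq_of_ne' hrp, Finsupp.single_eq_of_ne']
    exact fun h => hrp (congrArg Prod.fst h)

lemma repr_eq_zero_of_mem_coinv {z : B ⊗[k] B} (hz : z ∈ coinv k B) {p : M × M}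
    (hp : p.1 * p.2 ≠ 1) : (bas.tensorProduct bas).repr z p = 0 := by
  have hz' : coact k B z = unitR k B z := hz
  rw [← repr_coact_apply φ bas hbas hΔ, hz', unitR_apply, ← map_one φ, ← hbas,
    Module.Basis.tensorProduct_repr_tmul_apply, Module.Basis.repr_self,
    Finsupp.single_eq_of_ne' (Ne.symm hp), zero_smul]

theorem coinv_eq_span :
    coinv k B = Submodule.span k
      {z : B ⊗[k] B | ∃ g h : M, g * h = 1 ∧ z = φ g ⊗ₜ[k] φ h} := by
  refine le_antisymm (fun z hz => ?_) (Submodule.span_le.2 ?_)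
  · rw [← (bas.tensorProduct bas).linearCombination_repr z]
    refine Submodule.sum_mem _ fun p hp => Submodule.smul_mem _ _ (Submodule.subset_span ?_)
    have hp1 : p.1 * p.2 = 1 := by
      by_contra hne
      exact Finsupp.mem_support_iff.1 hp (repr_eq_zero_of_mem_coinv φ bas hbas hΔ hz hne)
    exact ⟨p.1, p.2, hp1, by simp [Module.Basis.tensorProduct_apply', hbas]⟩
  · rintro _ ⟨g, h, hgh, rfl⟩
    change coact k B _ = unitR k B _
    rw [coact_tmul (hΔ g) (hΔ h), unitR_apply, ← map_mul, hgh, map_one]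

end MonoidBialgebra

/-- The monoid bialgebra `kM` is encoded as a bialgebra `B` with a
multiplicative basis `φ : M →* B` of grouplike elements. -/
theorem stmt16 (k B M : Type*) [Field k] [Ring B] [Bialgebra k B] [Monoid M]
    (φ : M →* B)
    (hΔ : ∀ g : M, Coalgebra.comul (R := k) (φ g) = φ g ⊗ₜ[k] φ g)
    (hε : ∀ g : M, Coalgebra.counit (R := k) (φ g) = 1)
    (hbasis : ∃ bas : Module.Basis M k B, ∀ g : M, bas g = φ g) :
    coinv k B = Submodule.span k
      {z : B ⊗[k] B | ∃ g h : M, g * h = 1 ∧ z = φ g ⊗ₜ[k] φ h} ∧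
    LinearMap.range (pB k B) = Submodule.span k (⇑φ '' {g : M | ∃ h : M, g * h = 1}) := by
  obtain ⟨bas, hbas⟩ := hbasis
  have hcoinv := MonoidBialgebra.coinv_eq_span φ bas hbas hΔ
  refine ⟨hcoinv, ?_⟩
  rw [MonoidBialgebra.range_pB_eq_map, hcoinv, Submodule.map_span,
    MonoidBialgebra.image_pB0_tmul_of_mul_eq_one φ hε]
end
end
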